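/- arXiv:0905.0441 — 6 statements merged into one kernel-verified Lean document; each statement's English description precedes it below -/
import Mathlib

section
/- If finitely many arithmetic progressions with common differences n_1, ..., n_k (each progression of the form {a_i + m·n_i : m ∈ ℤ}) are pairwise disjoint and their union is all of ℤ, then the sum of 1/n_i over i equals 1. -/
/-- Arithmetic progression in ℤ with offset `a` and difference `n`. -/
def AP (a n : ℤ) : Set ℤ := {x : ℤ | ∃ m : ℤ, x = a + m * n}

lemma mem_AP_iff_modEq {x a n : ℤ} : x ∈ AP a n ↔ x ≡ a [ZMOD n] := by
  constructor
  · rintro ⟨m, rfl⟩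
    exact (Int.modEq_iff_dvd.mpr ⟨-m, by ring⟩)
  · intro h
    obtain ⟨m, hm⟩ := Int.modEq_iff_dvd.mp h
    exact ⟨-m, by linarith⟩

theorem sum_reciprocals_eq_one_of_tiling (k : ℕ) (a n : Fin k → ℤ)
    (hn : ∀ i, 1 ≤ n i)
    (hdisj : ∀ i j, i ≠ j → Disjoint (AP (a i) (n i)) (AP (a j) (n j)))
    (hcover : (⋃ i, AP (a i) (n i)) = Set.univ) :
    ∑ i, (1 : ℚ) / (n i : ℚ) = 1 := by
  classical
  set N : ℤ := ∏ i, n i with hNdef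
  have hnpos : ∀ i, 0 < n i := fun i => lt_of_lt_of_le one_pos (hn i)
  have hNpos : 0 < N := Finset.prod_pos (fun i _ => hnpos i)
  have hdvd : ∀ i, n i ∣ N := fun i => Finset.dvd_prod_of_mem _ (Finset.mem_univ i)
  have hex : ∀ x : ℤ, ∃ i, x ∈ AP (a i) (n i) := fun x =>
    Set.mem_iUnion.mp (hcover ▸ Set.mem_univ x)
  set f : ℤ → Fin k := fun x => (hex x).choose with hfdef
  have hf : ∀ x, x ∈ AP (a (f x)) (n (f x)) := fun x => (hex x).choose_spec
  -- fiberwise count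
  have hsum : (Finset.Ico (0:ℤ) N).card
      = ∑ i, ((Finset.Ico (0:ℤ) N).filter (fun x => f x = i)).card :=
    Finset.card_eq_sum_card_fiberwise (fun x _ => Finset.mem_univ (f x))
  -- identify each fiber
  have hfib : ∀ i, (Finset.Ico (0:ℤ) N).filter (fun x => f x = i)
      = (Finset.Ico (0:ℤ) N).filter (fun x => x ≡ a i [ZMOD n i]) := by
    intro i
    ext x
    simp only [Finset.mem_filter, and_congr_right_iff]
    intro _
    constructor
    · rintro rfl
      exact mem_AP_iff_modEq.mp (hf x)
    · intro hx
      by_contra hne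
      exact Set.disjoint_left.mp (hdisj _ _ hne) (hf x) (mem_AP_iff_modEq.mpr hx)
  -- count each residue class
  have hni : ∀ i, ((n i : ℚ)) ≠ 0 := fun i => by exact_mod_cast (hnpos i).ne'
  have hcast : ∀ i, ((N / n i : ℤ) : ℚ) = (N : ℚ) / (n i : ℚ) := by
    intro i
    have hq : ((N / n i : ℤ) : ℚ) * (n i : ℚ) = (N : ℚ) := by
      rw_mod_cast [Int.ediv_mul_cancel (hdvd i)]
    field_simp [hni i] at hq ⊢
    linarith
  have hcard : ∀ i, (((Finset.Ico (0:ℤ) N).filter (fun x => x ≡ a i [ZMOD n i])).card : ℤ)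
      = N / n i := by
    intro i
    rw [Int.Ico_filter_modEq_card _ _ (hnpos i)]
    have h1 : ((N : ℚ) - (a i : ℚ)) / (n i : ℚ)
        = ((0 : ℚ) - (a i : ℚ)) / (n i : ℚ) + ((N / n i : ℤ) : ℚ) := by
      rw [hcast i]
      field_simp
      ring
    have h2 : ⌈((N:ℚ) - (a i : ℚ)) / (n i : ℚ)⌉ - ⌈((0:ℚ) - (a i : ℚ)) / (n i : ℚ)⌉
        = N / n i := by
      rw [h1, Int.ceil_add_intCast]
      ring
    push_cast
    rw [h2, max_eq_left (Int.ediv_nonneg hNpos.le (hnpos i).le)]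
  -- put it together over ℤ
  have hNcard : ((Finset.Ico (0:ℤ) N).card : ℤ) = N := by
    rw [Int.card_Ico]; simpa using hNpos.le
  have key : (N : ℤ) = ∑ i, N / n i := by
    calc (N : ℤ) = ((Finset.Ico (0:ℤ) N).card : ℤ) := hNcard.symm
    _ = ∑ i, (((Finset.Ico (0:ℤ) N).filter (fun x => f x = i)).card : ℤ) := by
        rw [hsum]; push_cast; ring
    _ = ∑ i, N / n i := by
        refine Finset.sum_congr rfl (fun i _ => ?_)
        rw [hfib i, hcard i]
  -- move to ℚ
  have keyQ : (N : ℚ) = ∑ i, (N : ℚ) / (n i : ℚ) := by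
    calc (N : ℚ) = ((∑ i, N / n i : ℤ) : ℚ) := by exact_mod_cast congrArg (fun z : ℤ => (z:ℚ)) key
    _ = ∑ i, ((N / n i : ℤ) : ℚ) := by push_cast; rfl
    _ = ∑ i, (N : ℚ) / (n i : ℚ) := Finset.sum_congr rfl (fun i _ => hcast i)
  have hNQ : (N : ℚ) ≠ 0 := by exact_mod_cast hNpos.ne'
  calc ∑ i, (1:ℚ) / (n i : ℚ) = ∑ i, ((N:ℚ) / (n i : ℚ)) / (N:ℚ) :=
        Finset.sum_congr rfl (fun i _ => by rw [div_div, mul_comm, ← div_div, div_self hNQ])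
    _ = (∑ i, (N:ℚ) / (n i : ℚ)) / (N:ℚ) := by rw [Finset.sum_div]
    _ = 1 := by rw [← keyQ, div_self hNQ]
end

section
/- Let d ≥ 1. If ℤ^d is tiled by finitely many (at least two) Cartesian cosets T_j = v_j + L_j (pairwise disjoint, union ℤ^d), then there exist indices j ≠ m with L_j = L_m, i.e., two of the tiles are translates of one another. -/
/-- The Cartesian coset `v + (a₁ℤ × ⋯ × a_dℤ)` of `ℤ^d`. -/
def cartCoset (d : ℕ) (v : Fin d → ℤ) (a : Fin d → ℕ) : Set (Fin d → ℤ) :=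
  {x | ∀ i, (a i : ℤ) ∣ (x i - v i)}

/-!
Suppose the moduli vectors `a j` are pairwise distinct and let `j₀` maximise the index
`∏ i, a j₀ i`; then `a j₀` divides no other `a j` coordinatewise. Take `ζ i` a primitive
`a j₀ i`-th root of unity and sum the character `x ↦ ∏ i, ζ i ^ x i` over a box `[0, N)^d` of
periods. Over `ℤ^d`, and over every tile whose moduli are not all multiples of those of `j₀`,
this sum vanishes: translating by a period of the tile multiplies it by a root of unity `≠ 1`.
On the tile `j₀` the character is constant, so its sum does not vanish, contradicting the tiling.
-/

open Finset Function

variable {d : ℕ}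

theorem mem_cartCoset_iff_of_dvd_sub {v x y : Fin d → ℤ} {a : Fin d → ℕ}
    (h : ∀ i, (a i : ℤ) ∣ x i - y i) : x ∈ cartCoset d v a ↔ y ∈ cartCoset d v a := by
  refine forall_congr' fun i => ?_
  rw [show x i - v i = (x i - y i) + (y i - v i) by ring, dvd_add_right (h i)]

noncomputable def periodBox (d N : ℕ) : Finset (Fin d → ℤ) :=
  Fintype.piFinset fun _ => Ico 0 (N : ℤ)

theorem emod_mem_periodBox {N : ℕ} (hN : 0 < N) (z : Fin d → ℤ) :
    (fun i => z i % N) ∈ periodBox d N := by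
  have hN' : (0 : ℤ) < N := by exact_mod_cast hN
  simp [periodBox, Int.emod_nonneg _ hN'.ne', Int.emod_lt_of_pos _ hN']

theorem emod_eq_of_mem_periodBox {N : ℕ} {y z : Fin d → ℤ} (hy : y ∈ periodBox d N)
    (h : ∀ i, z i ≡ y i [ZMOD N]) : (fun i => z i % N) = y := by
  funext i
  have hyi := mem_Ico.1 (Fintype.mem_piFinset.1 hy i)
  rw [h i, Int.emod_eq_of_lt hyi.1 hyi.2]

theorem sum_periodBox_add {M : Type*} [AddCommMonoid M] {N : ℕ} (hN : 0 < N)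
    {f : (Fin d → ℤ) → M} (hf : ∀ x y, (∀ i, (N : ℤ) ∣ x i - y i) → f x = f y)
    (t : Fin d → ℤ) :
    ∑ x ∈ periodBox d N, f (x + t) = ∑ x ∈ periodBox d N, f x := by
  refine sum_nbij' (fun x i => (x i + t i) % N) (fun y i => (y i - t i) % N)
    (fun x _ => emod_mem_periodBox hN _) (fun y _ => emod_mem_periodBox hN _)
    (fun x hx => emod_eq_of_mem_periodBox hx fun i => ?_)
    (fun y hy => emod_eq_of_mem_periodBox hy fun i => ?_)
    (fun x _ => hf _ _ fun i => (Int.mod_modEq (x i + t i) N).dvd)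
  · simpa using (Int.mod_modEq (x i + t i) N).sub_right (t i)
  · simpa using (Int.mod_modEq (y i - t i) N).add_right (t i)

theorem sum_periodBox_eq_zero_of_add_eq_mul {K : Type*} [Ring K] [NoZeroDivisors K] {N : ℕ}
    (hN : 0 < N) {f : (Fin d → ℤ) → K} (hf : ∀ x y, (∀ i, (N : ℤ) ∣ x i - y i) → f x = f y)
    {t : Fin d → ℤ} {c : K} (hc : c ≠ 1) (hft : ∀ x, f (x + t) = c * f x) :
    ∑ x ∈ periodBox d N, f x = 0 := by
  have hfix : c * ∑ x ∈ periodBox d N, f x = ∑ x ∈ periodBox d N, f x := by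
    rw [mul_sum, ← sum_periodBox_add hN hf t]
    simp only [hft]
  have : (c - 1) * ∑ x ∈ periodBox d N, f x = 0 := by rw [sub_mul, hfix, one_mul, sub_self]
  exact (mul_eq_zero.1 this).resolve_left (sub_ne_zero.2 hc)

section Character

variable {G : Type*} [CommGroup G] (ζ : Fin d → G)

def zpowProd (x : Fin d → ℤ) : G := ∏ i, ζ i ^ x i

theorem zpowProd_add (x y : Fin d → ℤ) : zpowProd ζ (x + y) = zpowProd ζ x * zpowProd ζ y := by
  simp only [zpowProd, Pi.add_apply, zpow_add, prod_mul_distrib]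

theorem zpowProd_single (i : Fin d) (k : ℤ) : zpowProd ζ (Pi.single i k) = ζ i ^ k := by
  rw [zpowProd, prod_eq_single i (fun j _ hj => by rw [Pi.single_eq_of_ne hj, zpow_zero])
    (by simp), Pi.single_eq_same]

variable {ζ}

theorem zpowProd_eq_of_dvd_sub {b : Fin d → ℕ} (hζ : ∀ i, IsPrimitiveRoot (ζ i) (b i))
    {x y : Fin d → ℤ} (h : ∀ i, (b i : ℤ) ∣ x i - y i) : zpowProd ζ x = zpowProd ζ y :=
  prod_congr rfl fun i _ => by
    rw [← div_eq_one, div_eq_mul_inv, ← zpow_sub, (hζ i).zpow_eq_one_iff_dvd]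
    exact h i

end Character

section CharacterSums

variable {K : Type*} [Field K] {ζ : Fin d → Kˣ} {b : Fin d → ℕ} {N : ℕ}

theorem sum_periodBox_indicator_zpowProd_eq_zero (hζ : ∀ i, IsPrimitiveRoot (ζ i) (b i))
    (hN : 0 < N) (hbN : ∀ i, b i ∣ N) (w : Fin d → ℤ) {c : Fin d → ℕ} (hcN : ∀ i, c i ∣ N)
    {i : Fin d} (hi : ¬ b i ∣ c i) :
    ∑ x ∈ periodBox d N,
      (cartCoset d w c).indicator (fun x => ((zpowProd ζ x : Kˣ) : K)) x = 0 := by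
  classical
  refine sum_periodBox_eq_zero_of_add_eq_mul hN (t := Pi.single i (c i))
    (c := ((ζ i ^ (c i : ℤ) : Kˣ) : K)) ?_ ?_ ?_
  · intro x y hxy
    have hdvd : ∀ m : Fin d → ℕ, (∀ k, m k ∣ N) → ∀ k, (m k : ℤ) ∣ x k - y k :=
      fun m hm k => (Int.natCast_dvd_natCast.2 (hm k)).trans (hxy k)
    simp only [Set.indicator_apply, mem_cartCoset_iff_of_dvd_sub (hdvd c hcN),
      zpowProd_eq_of_dvd_sub hζ (hdvd b hbN)]
  · rw [Ne, Units.val_eq_one, (hζ i).zpow_eq_one_iff_dvd]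
    exact_mod_cast hi
  · intro x
    have hmem : x + Pi.single i (c i : ℤ) ∈ cartCoset d w c ↔ x ∈ cartCoset d w c := by
      refine mem_cartCoset_iff_of_dvd_sub fun k => ?_
      rw [Pi.add_apply, add_sub_cancel_left]
      rcases eq_or_ne k i with rfl | hk
      · simp
      · simp [hk]
    simp only [Set.indicator_apply, hmem, zpowProd_add, zpowProd_single, Units.val_mul]
    split_ifs <;> ring

theorem sum_periodBox_indicator_zpowProd_ne_zero [CharZero K]
    (hζ : ∀ i, IsPrimitiveRoot (ζ i) (b i)) (hN : 0 < N) (hbN : ∀ i, b i ∣ N) (w : Fin d → ℤ) :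
    ∑ x ∈ periodBox d N, (cartCoset d w b).indicator (fun x => ((zpowProd ζ x : Kˣ) : K)) x
      ≠ 0 := by
  classical
  have hb : ∀ i, (0 : ℤ) < b i := fun i => by exact_mod_cast Nat.pos_of_dvd_of_pos (hbN i) hN
  have hw : (fun i => w i % b i) ∈ (periodBox d N).filter (· ∈ cartCoset d w b) := by
    refine mem_filter.2 ⟨Fintype.mem_piFinset.2 fun i => mem_Ico.2 ⟨?_, ?_⟩,
      fun i => (Int.mod_modEq (w i) (b i)).symm.dvd⟩
    · exact Int.emod_nonneg _ (hb i).ne'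
    · exact (Int.emod_lt_of_pos _ (hb i)).trans_le (by exact_mod_cast Nat.le_of_dvd hN (hbN i))
  simp only [Set.indicator_apply]
  rw [← sum_filter,
    sum_congr rfl fun x hx => by rw [zpowProd_eq_of_dvd_sub hζ (mem_filter.1 hx).2],
    sum_const, nsmul_eq_mul]
  exact mul_ne_zero (Nat.cast_ne_zero.2 (card_ne_zero.2 ⟨_, hw⟩)) (Units.ne_zero _)

end CharacterSums

theorem sum_indicator_eq_of_pairwise_disjoint_of_iUnion_eq_univ {ι α M : Type*} [Fintype ι]
    [AddCommMonoid M] {T : ι → Set α} (hdisj : Pairwise (Disjoint on T))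
    (hcover : ⋃ j, T j = Set.univ) (f : α → M) (x : α) : ∑ j, (T j).indicator f x = f x := by
  rw [← indicator_biUnion_apply univ T (hdisj.set_pairwise _)]
  simp [hcover]

theorem exists_ne_forall_dvd_of_cartCoset_tiling {ι : Type*} [Fintype ι] [Nontrivial ι]
    (v : ι → Fin d → ℤ) (a : ι → Fin d → ℕ) (ha : ∀ j i, 0 < a j i)
    (hdisj : Pairwise (Disjoint on fun j => cartCoset d (v j) (a j)))
    (hcover : ⋃ j, cartCoset d (v j) (a j) = Set.univ) (j₀ : ι) :
    ∃ j ≠ j₀, ∀ i, a j₀ i ∣ a j i := by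
  by_cases hone : ∀ i, a j₀ i = 1
  · obtain ⟨j, hj⟩ := exists_ne j₀
    exact ⟨j, hj, fun i => by simp [hone i]⟩
  obtain ⟨i₀, hi₀⟩ := not_forall.1 hone
  by_contra! hsep
  set N := ∏ j, ∏ i, a j i
  have hN : 0 < N := prod_pos fun j _ => prod_pos fun i _ => ha j i
  have haN : ∀ j i, a j i ∣ N := fun j i =>
    (dvd_prod_of_mem _ (mem_univ i)).trans (dvd_prod_of_mem (fun j => ∏ i, a j i) (mem_univ j))
  obtain ⟨ζ, hζ⟩ : ∃ ζ : Fin d → ℂˣ, ∀ i, IsPrimitiveRoot (ζ i) (a j₀ i) := ⟨_, fun i =>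
    (Complex.isPrimitiveRoot_exp _ (ha j₀ i).ne').isUnit_unit (ha j₀ i).ne'⟩
  set S : ι → ℂ := fun j => ∑ x ∈ periodBox d N,
    (cartCoset d (v j) (a j)).indicator (fun x => ((zpowProd ζ x : ℂˣ) : ℂ)) x
  have htotal : ∑ j, S j = 0 := by
    rw [sum_comm]
    simp only [sum_indicator_eq_of_pairwise_disjoint_of_iUnion_eq_univ hdisj hcover]
    -- `ℤ^d` is the coset with all moduli `1`
    simpa [cartCoset] using sum_periodBox_indicator_zpowProd_eq_zero (K := ℂ) hζ hN (haN j₀) 0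
      (c := fun _ => 1) (fun _ => one_dvd N) (i := i₀) (by simpa [Nat.dvd_one] using hi₀)
  have hS : ∑ j, S j = S j₀ := sum_eq_single_of_mem j₀ (mem_univ j₀) fun j _ hj =>
    (hsep j hj).elim fun i hi =>
      sum_periodBox_indicator_zpowProd_eq_zero hζ hN (haN j₀) (v j) (haN j) hi
  exact sum_periodBox_indicator_zpowProd_ne_zero hζ hN (haN j₀) (v j₀) (hS.symm.trans htotal)

theorem eq_of_forall_dvd_of_prod_le {ι : Type*} [Fintype ι] {b c : ι → ℕ} (hb : ∀ i, 0 < b i)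
    (hc : ∀ i, 0 < c i) (hdvd : ∀ i, b i ∣ c i) (hprod : ∏ i, c i ≤ ∏ i, b i) : c = b := by
  have hle : ∀ i, b i ≤ c i := fun i => Nat.le_of_dvd (hc i) (hdvd i)
  by_contra hne
  obtain ⟨i, hi⟩ := Function.ne_iff.1 hne
  have : ∏ i, b i < ∏ i, c i := prod_lt_prod (fun i _ => hb i) (fun i _ => hle i)
    ⟨i, mem_univ i, (hle i).lt_of_ne (Ne.symm hi)⟩
  exact hprod.not_gt this

theorem tiling_has_two_translate_tiles_general (d : ℕ) (n : ℕ) (hn : 2 ≤ n)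
    (v : Fin n → Fin d → ℤ) (a : Fin n → Fin d → ℕ)
    (ha : ∀ j i, 0 < a j i)
    (hdisj : ∀ j m, j ≠ m → Disjoint (cartCoset d (v j) (a j)) (cartCoset d (v m) (a m)))
    (hcover : (⋃ j, cartCoset d (v j) (a j)) = Set.univ) :
    ∃ j m, j ≠ m ∧
      {x : Fin d → ℤ | ∀ i, (a j i : ℤ) ∣ x i} = {x : Fin d → ℤ | ∀ i, (a m i : ℤ) ∣ x i} := by
  by_contra! hdistinct
  have hinj : Injective a := fun j m hjm => by_contra fun hne => hdistinct j m hne (by rw [hjm])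
  have : Nontrivial (Fin n) := Fin.nontrivial_iff_two_le.2 hn
  obtain ⟨j₀, -, hmax⟩ := exists_max_image univ (fun j => ∏ i, a j i) univ_nonempty
  obtain ⟨j, hj, hdvd⟩ :=
    exists_ne_forall_dvd_of_cartCoset_tiling v a ha (fun j m => hdisj j m) hcover j₀
  exact hj (hinj (eq_of_forall_dvd_of_prod_le (ha j₀) (ha j) hdvd (hmax j (mem_univ j))))

theorem tiling_has_two_translate_tiles (d : ℕ) (hd : 1 ≤ d) (n : ℕ) (hn : 2 ≤ n)
    (v : Fin n → Fin d → ℤ) (a : Fin n → Fin d → ℕ)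
    (ha : ∀ j i, 0 < a j i)
    (hdisj : ∀ j m, j ≠ m → Disjoint (cartCoset d (v j) (a j)) (cartCoset d (v m) (a m)))
    (hcover : (⋃ j, cartCoset d (v j) (a j)) = Set.univ) :
    ∃ j m, j ≠ m ∧
      {x : Fin d → ℤ | ∀ i, (a j i : ℤ) ∣ x i} = {x : Fin d → ℤ | ∀ i, (a m i : ℤ) ∣ x i} :=
  tiling_has_two_translate_tiles_general d n hn v a ha hdisj hcover
end

section
/- In any tiling of ℤ^d by at least two Cartesian cosets v_j + L_j, if L_m has the maximal index among all the L_j, then there is some j ≠ m with L_j = L_m. -/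
open Finset Function

lemma existsUnique_mem_of_pairwise_disjoint {α ι : Type*} {s : ι → Set α}
    (hdisj : Pairwise (Disjoint on s)) (hcover : ⋃ j, s j = Set.univ) (x : α) :
    ∃! j, x ∈ s j := by
  obtain ⟨j, hj⟩ := Set.mem_iUnion.mp (hcover ▸ Set.mem_univ x)
  exact ⟨j, hj, fun k hk => by_contra fun hkj => Set.disjoint_left.mp (hdisj hkj) hk hj⟩

lemma eq_of_forall_dvd_of_prod_le_s10 {ι : Type*} [Fintype ι] {x y : ι → ℕ}
    (hdvd : ∀ i, x i ∣ y i) (hy : ∀ i, 0 < y i) (hle : ∏ i, y i ≤ ∏ i, x i) :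
    y = x := by
  by_contra hne
  obtain ⟨i, hi⟩ := Function.ne_iff.mp hne
  have hlt : ∏ i, x i < ∏ i, y i :=
    prod_lt_prod (fun j _ => Nat.pos_of_dvd_of_pos (hdvd j) (hy j))
      (fun j _ => Nat.le_of_dvd (hy j) (hdvd j))
      ⟨i, mem_univ i, (Nat.le_of_dvd (hy i) (hdvd i)).lt_of_ne' hi⟩
  omega

lemma geom_sum_eq_zero_of_pow_eq_one {R : Type*} [CommRing R] [IsDomain R] {x : R} {n : ℕ}
    (hx : x ≠ 1) (hxn : x ^ n = 1) : ∑ i ∈ range n, x ^ i = 0 := by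
  have := geom_sum_mul x n
  rw [hxn, sub_self] at this
  exact (mul_eq_zero.mp this).resolve_right (sub_ne_zero.mpr hx)

lemma Int.dvd_natCast_sub_iff_mod_eq {b r : ℕ} {w : ℤ} (hr : r < b) (hrw : (b : ℤ) ∣ r - w)
    (t : ℕ) : (b : ℤ) ∣ t - w ↔ t % b = r := by
  rw [← ZMod.intCast_eq_intCast_iff_dvd_sub] at hrw ⊢
  rw [hrw, Int.cast_natCast, Int.cast_natCast, ZMod.natCast_eq_natCast_iff',
    Nat.mod_eq_of_lt hr, eq_comm]

lemma Finset.sum_range_ite_dvd_sub {M : Type*} [AddCommMonoid M] (f : ℕ → M) {b c r : ℕ}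
    {w : ℤ} (hbc : b ∣ c) (hr : r < b) (hrw : (b : ℤ) ∣ r - w) :
    ∑ t ∈ range c, (if (b : ℤ) ∣ t - w then f t else 0) =
      ∑ k ∈ range (c / b), f (r + k * b) := by
  have hb : 0 < b := by omega
  simp_rw [Int.dvd_natCast_sub_iff_mod_eq hr hrw]
  rw [← sum_filter]
  refine sum_nbij' (· / b) (r + · * b) (fun t ht => ?_) (fun k hk => ?_) (fun t ht => ?_)
    (fun k _ => ?_) (fun t ht => ?_)
  · simp only [mem_filter, mem_range] at ht ⊢
    exact Nat.div_lt_div_of_lt_of_dvd hbc ht.1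
  · simp only [mem_filter, mem_range] at hk ⊢
    refine ⟨?_, by rw [Nat.add_mul_mod_self_right, Nat.mod_eq_of_lt hr]⟩
    have := Nat.mul_le_mul_right b (Nat.succ_le_of_lt hk)
    rw [Nat.div_mul_cancel hbc] at this
    nlinarith
  · simp only [mem_filter, mem_range] at ht
    rw [← ht.2, Nat.mod_add_div']
  · rw [Nat.add_mul_div_right _ _ hb, Nat.div_eq_of_lt hr, zero_add]
  · simp only [mem_filter, mem_range] at ht
    rw [← ht.2, Nat.mod_add_div']

def cosetSum {R : Type*} [Semiring R] (z : R) (c b : ℕ) (w : ℤ) : R :=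
  ∑ t ∈ range c, if (b : ℤ) ∣ t - w then z ^ t else 0

lemma IsPrimitiveRoot.cosetSum_eq_zero_iff {R : Type*} [CommRing R] [IsDomain R] [CharZero R]
    {ζ : R} {a b c : ℕ} (hζ : IsPrimitiveRoot ζ a) (hc : 0 < c) (hac : a ∣ c) (hbc : b ∣ c)
    (w : ℤ) : cosetSum ζ c b w = 0 ↔ ¬ a ∣ b := by
  have hb : 0 < b := Nat.pos_of_dvd_of_pos hbc hc
  have hb' : (0 : ℤ) < b := by exact_mod_cast hb
  have hw := Int.emod_nonneg w hb'.ne'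
  have hr : (w % b).toNat < b := by have := Int.emod_lt_of_pos w hb'; omega
  have hrw : (b : ℤ) ∣ ((w % b).toNat : ℤ) - w :=
    ⟨-(w / b), by rw [Int.toNat_of_nonneg hw, Int.emod_def]; ring⟩
  simp_rw [cosetSum, sum_range_ite_dvd_sub _ hbc hr hrw, pow_add, pow_mul', ← mul_sum]
  have hζ₀ : ζ ≠ 0 := hζ.ne_zero (Nat.pos_of_dvd_of_pos hac hc).ne'
  rw [mul_eq_zero, or_iff_right (pow_ne_zero _ hζ₀), ← hζ.pow_eq_one_iff_dvd]
  by_cases h : ζ ^ b = 1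
  · simp only [h, one_pow, sum_const, card_range, nsmul_eq_mul, mul_one, Nat.cast_eq_zero,
      not_true_eq_false, iff_false]
    exact (Nat.div_pos (Nat.le_of_dvd hc hbc) hb).ne'
  · refine iff_of_true (geom_sum_eq_zero_of_pow_eq_one h ?_) h
    rw [← pow_mul, Nat.mul_div_cancel' hbc, hζ.pow_eq_one_iff_dvd]
    exact hac

lemma sum_prod_cosetSum_of_tiling {ι R : Type*} [Fintype ι] [CommSemiring R] {d : ℕ}
    {v : ι → Fin d → ℤ} {a : ι → Fin d → ℕ}
    (htile : ∀ x, ∃! j, x ∈ cartCoset d (v j) (a j)) (c : Fin d → ℕ) (z : Fin d → R) :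
    ∑ j, ∏ i, cosetSum (z i) (c i) (a j i) (v j i) = ∏ i, ∑ t ∈ range (c i), z i ^ t := by
  classical
  simp_rw [cosetSum, prod_univ_sum, Fintype.prod_ite_zero]
  rw [sum_comm]
  refine sum_congr rfl fun g _ => ?_
  obtain ⟨j, hj, huniq⟩ := htile fun i => g i
  refine (Fintype.sum_eq_single j fun k hk => ?_).trans (if_pos hj)
  exact if_neg (mt (huniq k) hk)

theorem exists_ne_forall_dvd_of_tiling {ι : Type*} [Fintype ι] {d : ℕ}
    {v : ι → Fin d → ℤ} {a : ι → Fin d → ℕ}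
    (htile : ∀ x, ∃! j, x ∈ cartCoset d (v j) (a j)) (ha : ∀ j i, 0 < a j i) (m : ι)
    (hm : ∃ i, a m i ≠ 1) :
    ∃ j ≠ m, ∀ i, a m i ∣ a j i := by
  classical
  obtain ⟨i₀, hi₀⟩ := hm
  by_contra! hcon
  set c : Fin d → ℕ := fun i => ∏ j, a j i
  have hc : ∀ i, 0 < c i := fun i => prod_pos fun j _ => ha j i
  have hdvd : ∀ j i, a j i ∣ c i := fun j i => dvd_prod_of_mem _ (mem_univ j)
  set ζ : Fin d → ℂ := fun i => Complex.exp (2 * Real.pi * Complex.I / (a m i))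
  have hζ : ∀ i, IsPrimitiveRoot (ζ i) (a m i) := fun i =>
    Complex.isPrimitiveRoot_exp _ (ha m i).ne'
  have hvanish : ∀ j ≠ m, ∏ i, cosetSum (ζ i) (c i) (a j i) (v j i) = 0 := fun j hj => by
    obtain ⟨i, hi⟩ := hcon j hj
    exact prod_eq_zero (mem_univ i)
      (((hζ i).cosetSum_eq_zero_iff (hc i) (hdvd m i) (hdvd j i) _).2 hi)
  have htotal : ∏ i, ∑ t ∈ range (c i), ζ i ^ t = 0 := by
    refine prod_eq_zero (mem_univ i₀) (geom_sum_eq_zero_of_pow_eq_one ?_ ?_)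
    · exact (hζ i₀).ne_one (Nat.one_lt_iff_ne_zero_and_ne_one.2 ⟨(ha m i₀).ne', hi₀⟩)
    · exact (hζ i₀).pow_eq_one_iff_dvd _ |>.2 (hdvd m i₀)
  have hkey := sum_prod_cosetSum_of_tiling htile c ζ
  rw [Fintype.sum_eq_single m hvanish, htotal, prod_eq_zero_iff] at hkey
  obtain ⟨i, -, hi⟩ := hkey
  exact ((hζ i).cosetSum_eq_zero_iff (hc i) (hdvd m i) (hdvd m i) _).1 hi dvd_rfl

theorem maximal_index_tile_has_translate (d n : ℕ) (hn : 2 ≤ n)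
    (v : Fin n → Fin d → ℤ) (a : Fin n → Fin d → ℕ)
    (ha : ∀ j i, 0 < a j i)
    (hdisj : ∀ j m, j ≠ m → Disjoint (cartCoset d (v j) (a j)) (cartCoset d (v m) (a m)))
    (hcover : (⋃ j, cartCoset d (v j) (a j)) = Set.univ)
    (m : Fin n) (hmax : ∀ j, ∏ i, a j i ≤ ∏ i, a m i) :
    ∃ j, j ≠ m ∧
      {x : Fin d → ℤ | ∀ i, (a j i : ℤ) ∣ x i} = {x : Fin d → ℤ | ∀ i, (a m i : ℤ) ∣ x i} := by
  have htile := existsUnique_mem_of_pairwise_disjoint (fun j k h => hdisj j k h) hcover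
  obtain ⟨j, hjm, hdvd⟩ : ∃ j ≠ m, ∀ i, a m i ∣ a j i := by
    by_cases! hone : ∀ i, a m i = 1
    · have : Nontrivial (Fin n) := Fin.nontrivial_iff_two_le.2 hn
      obtain ⟨j, hj⟩ := exists_ne m
      exact ⟨j, hj, fun i => hone i ▸ one_dvd _⟩
    · exact exists_ne_forall_dvd_of_tiling htile ha m hone
  exact ⟨j, hjm, by rw [eq_of_forall_dvd_of_prod_le_s10 hdvd (ha j) (hmax j)]⟩
end

section
/- ℤ³ admits a tiling by four cosets of four pairwise distinct subgroups: namely by (0,1,0)+2ℤ×2ℤ×ℤ, (0,0,1)+ℤ×2ℤ×2ℤ, (1,0,0)+2ℤ×ℤ×2ℤ, and the subgroup {(x,y,z) : x ≡ y ≡ z (mod 2)}; these four sets are pairwise disjoint, cover ℤ³, and no two are cosets of the same subgroup. -/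
def tileA : Set (ℤ × ℤ × ℤ) := {p | (2 : ℤ) ∣ p.1 ∧ (2 : ℤ) ∣ (p.2.1 - 1)}
def tileB : Set (ℤ × ℤ × ℤ) := {p | (2 : ℤ) ∣ p.2.1 ∧ (2 : ℤ) ∣ (p.2.2 - 1)}
def tileC : Set (ℤ × ℤ × ℤ) := {p | (2 : ℤ) ∣ (p.1 - 1) ∧ (2 : ℤ) ∣ p.2.2}
def tileD : Set (ℤ × ℤ × ℤ) := {p | (2 : ℤ) ∣ (p.1 - p.2.1) ∧ (2 : ℤ) ∣ (p.2.1 - p.2.2)}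

def tiles : Fin 4 → Set (ℤ × ℤ × ℤ) := ![tileA, tileB, tileC, tileD]

/-!
Membership in a tile depends only on the parities of the coordinates, and each of the eight
parity classes lies in exactly one tile. For distinctness, each tile `i` has a period
`tilePeriod i` that moves every other tile off itself. The translations preserving a coset
`v + L` are exactly the elements of `L`, so if tiles `i` and `j` were cosets of one `L`, then
`tilePeriod i ∈ L` would be a period of tile `j` too.
-/

theorem add_mem_image_add_left_iff {G : Type*} [AddGroup G] (L : AddSubgroup G) {v p : G}
    (hp : p ∈ (v + ·) '' (L : Set G)) (d : G) :
    p + d ∈ (v + ·) '' (L : Set G) ↔ d ∈ L := by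
  obtain ⟨l, hl, rfl⟩ := hp
  have hmem (q : G) : q ∈ (v + ·) '' (L : Set G) ↔ -v + q ∈ L := mem_leftAddCoset_iff v
  rw [hmem, show -v + (v + l + d) = l + d by rw [add_assoc, neg_add_cancel_left]]
  exact L.add_mem_cancel_left hl

theorem exists_mem_tiles (p : ℤ × ℤ × ℤ) : ∃ i, p ∈ tiles i := by
  obtain ⟨x, y, z⟩ := p
  simp only [Fin.exists_fin_succ, IsEmpty.exists_iff, tiles, tileA, tileB, tileC, tileD,
    Matrix.cons_val_zero, Matrix.cons_val_succ, Set.mem_ofPred_eq, or_false]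
  omega

theorem eq_of_mem_tiles {i j : Fin 4} {p : ℤ × ℤ × ℤ} (hi : p ∈ tiles i) (hj : p ∈ tiles j) :
    i = j := by
  obtain ⟨x, y, z⟩ := p
  fin_cases i <;> fin_cases j <;>
    simp only [tiles, tileA, tileB, tileC, tileD, Fin.zero_eta, Fin.mk_one, Fin.reduceFinMk,
      Matrix.cons_val, Matrix.cons_val_zero, Matrix.cons_val_one, Set.mem_ofPred_eq,
      Fin.reduceEq] at hi hj ⊢ <;> omega

def tilePeriod : Fin 4 → ℤ × ℤ × ℤ := ![(0, 0, 1), (1, 0, 0), (0, 1, 0), (1, 1, 1)]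

theorem add_tilePeriod_mem_tiles_iff {i j : Fin 4} {p : ℤ × ℤ × ℤ} (hp : p ∈ tiles j) :
    p + tilePeriod i ∈ tiles j ↔ i = j := by
  obtain ⟨x, y, z⟩ := p
  fin_cases i <;> fin_cases j <;>
    simp only [tiles, tilePeriod, tileA, tileB, tileC, tileD, Fin.zero_eta, Fin.mk_one,
      Fin.reduceFinMk, Matrix.cons_val, Matrix.cons_val_zero, Matrix.cons_val_one,
      Set.mem_ofPred_eq, Prod.mk_add_mk, Fin.reduceEq, iff_true, iff_false] at hp ⊢ <;> omega

theorem Z3_tiled_by_cosets_of_distinct_subgroups :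
    (∀ i j : Fin 4, i ≠ j → Disjoint (tiles i) (tiles j)) ∧
    (⋃ i, tiles i) = Set.univ ∧
    (∀ i j : Fin 4, i ≠ j →
      ∀ (L : AddSubgroup (ℤ × ℤ × ℤ)) (v w : ℤ × ℤ × ℤ),
        ¬ (tiles i = (v + ·) '' (L : Set (ℤ × ℤ × ℤ)) ∧
           tiles j = (w + ·) '' (L : Set (ℤ × ℤ × ℤ)))) := by
  refine ⟨fun i j hij => Set.disjoint_left.2 fun p hi hj => hij (eq_of_mem_tiles hi hj),
    Set.iUnion_eq_univ_iff.2 exists_mem_tiles, ?_⟩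
  rintro i j hij L v w ⟨hi, hj⟩
  have hv : v ∈ tiles i := hi ▸ ⟨0, L.zero_mem, add_zero v⟩
  have hw : w ∈ tiles j := hj ▸ ⟨0, L.zero_mem, add_zero w⟩
  have hL : tilePeriod i ∈ L := by
    have hvi := (add_tilePeriod_mem_tiles_iff hv).2 rfl
    rw [hi] at hv hvi
    exact (add_mem_image_add_left_iff L hv _).1 hvi
  apply hij
  rw [← add_tilePeriod_mem_tiles_iff hw, hj]
  rw [hj] at hw
  exact (add_mem_image_add_left_iff L hw _).2 hL
end

section
/- For every d ≥ 3, ℤ^d admits a tiling by four cosets of pairwise distinct subgroups (no two of the four tiles being translates of one another). -/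
/-!
The eight points of `(ℤ/2)³` split into four pairs `{tᵢ, tᵢ + wᵢ}` whose differences `wᵢ` are
pairwise distinct, i.e. into cosets of four distinct subgroups `{0, wᵢ}`. Pulling this tiling back
along the surjection `ℤ^d → (ℤ/2)³` (reduce the first three coordinates mod 2) gives a tiling of
`ℤ^d` by cosets, and pulling back along a surjection keeps distinct subgroups distinct.
-/

open Function Submodule

def IsCosetTiling {ι G : Type*} [AddGroup G] (L : ι → AddSubgroup G) (v : ι → G) : Prop :=
  (∀ i j, i ≠ j → Disjoint ((v i + ·) '' (L i : Set G)) ((v j + ·) '' (L j : Set G))) ∧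
    ⋃ i, (v i + ·) '' (L i : Set G) = Set.univ

theorem AddSubgroup.preimage_image_add_left {G H : Type*} [AddGroup G] [AddGroup H]
    (f : G →+ H) (K : AddSubgroup H) (s : G) :
    f ⁻¹' ((f s + ·) '' (K : Set H)) = (s + ·) '' (K.comap f : Set G) := by
  ext x
  simp [Set.image_add_left]

theorem IsCosetTiling.comap {ι G H : Type*} [AddGroup G] [AddGroup H] {L : ι → AddSubgroup H}
    {v : ι → H} (h : IsCosetTiling L v) (f : G →+ H) {s : ι → G} (hs : ∀ i, f (s i) = v i) :
    IsCosetTiling (fun i => (L i).comap f) s := by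
  have hpre (i : ι) :
      (s i + ·) '' ((L i).comap f : Set G) = f ⁻¹' ((v i + ·) '' (L i : Set H)) := by
    rw [← hs i, AddSubgroup.preimage_image_add_left]
  refine ⟨fun i j hij => ?_, ?_⟩
  · rw [hpre, hpre]
    exact (h.1 i j hij).preimage f
  · simp_rw [hpre, ← Set.preimage_iUnion, h.2, Set.preimage_univ]

namespace CubeTiling

def direction : Fin 4 → Fin 3 → ZMod 2 := ![![0, 0, 1], ![1, 0, 0], ![1, 1, 0], ![0, 1, 1]]

def offset : Fin 4 → Fin 3 → ZMod 2 := ![![0, 0, 0], ![0, 1, 0], ![0, 1, 1], ![1, 0, 0]]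

def line (i : Fin 4) : AddSubgroup (Fin 3 → ZMod 2) :=
  (span (ZMod 2) {direction i}).toAddSubgroup

theorem mem_image_add_line {i : Fin 4} {x : Fin 3 → ZMod 2} :
    x ∈ (offset i + ·) '' (line i : Set (Fin 3 → ZMod 2)) ↔
      ∃ a : ZMod 2, a • direction i = -offset i + x := by
  simp [Set.image_add_left, line, mem_span_singleton]

theorem line_injective : Injective line := by
  intro i j hij
  have hmem : direction i ∈ line j := hij ▸ mem_span_singleton_self _
  clear hij
  revert hmem
  simp only [line, mem_toAddSubgroup, mem_span_singleton]
  revert i j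
  decide

theorem isCosetTiling : IsCosetTiling line offset := by
  refine ⟨fun i j hij => Set.disjoint_left.2 fun x hi hj => ?_, Set.eq_univ_of_forall fun x => ?_⟩
  · rw [mem_image_add_line] at hi hj
    revert i j x
    decide
  · simp only [Set.mem_iUnion, mem_image_add_line]
    revert x
    decide

end CubeTiling

theorem Zd_tiled_by_four_cosets_of_distinct_subgroups (d : ℕ) (hd : 3 ≤ d) :
    ∃ (L : Fin 4 → AddSubgroup (Fin d → ℤ)) (v : Fin 4 → (Fin d → ℤ)),
      (∀ i j : Fin 4, i ≠ j → L i ≠ L j) ∧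
      (∀ i j : Fin 4, i ≠ j →
        Disjoint ((v i + ·) '' (L i : Set (Fin d → ℤ))) ((v j + ·) '' (L j : Set (Fin d → ℤ)))) ∧
      (⋃ i, (v i + ·) '' (L i : Set (Fin d → ℤ))) = Set.univ := by
  let φ : (Fin d → ℤ) →+ (Fin 3 → ZMod 2) :=
    ((Int.castAddHom (ZMod 2)).compLeft (Fin 3)).comp
      (LinearMap.funLeft ℤ ℤ (Fin.castLE hd)).toAddMonoidHom
  have hφ : Surjective φ := ZMod.intCast_surjective.comp_left.comp
    (LinearMap.funLeft_surjective_of_injective ℤ ℤ _ (Fin.castLE_injective hd))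
  refine ⟨fun i => (CubeTiling.line i).comap φ, fun i => surjInv hφ (CubeTiling.offset i), ?_,
    CubeTiling.isCosetTiling.comap φ fun i => surjInv_eq hφ _⟩
  exact fun i j hij => ((AddSubgroup.comap_injective hφ).comp CubeTiling.line_injective).ne hij
end

section
/- ℤ² cannot be tiled by finitely many (at least two) Cartesian cosets v + (aℤ × bℤ) no two of which are cosets of the same subgroup; equivalently, any tiling of ℤ² by at least two Cartesian cosets contains two tiles that are translates of one another. -/
/-!
Let `T₀ = v₀ + (a₀ℤ × b₀ℤ)` be a tile of maximal index `a₀ b₀`, and `ζ₁`, `ζ₂` primitive `a₀`-th and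
`b₀`-th roots of unity. Sum the character `(x, y) ↦ ζ₁ ^ x * ζ₂ ^ y` over a box `[0, A) × [0, B)`
whose sides are multiples of all moduli: a tile `v + (aℤ × bℤ)` contributes a nonzero amount iff
`a₀ ∣ a` and `b₀ ∣ b`. If no two tiles are translates, maximality leaves `T₀` as the only
contributor, so the sum over the whole box is nonzero. This forces `a₀ = b₀ = 1`, and then every
tile contributes, which is absurd as soon as there are two tiles.
-/

/-- The Cartesian coset `v + (aℤ × bℤ)` of `ℤ²`. -/
def cartCoset2 (v : ℤ × ℤ) (a b : ℕ) : Set (ℤ × ℤ) :=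
  {p | (a : ℤ) ∣ (p.1 - v.1) ∧ (b : ℤ) ∣ (p.2 - v.2)}

open Finset Function

theorem sum_range_mul_eq_geom_sum_mul {M : Type*} [CommSemiring M] {g : ℕ → M} {c : M} {d : ℕ}
    (hg : ∀ x, g (x + d) = c * g x) (e : ℕ) :
    ∑ x ∈ range (d * e), g x = (∑ k ∈ range e, c ^ k) * ∑ x ∈ range d, g x := by
  have hshift : ∀ k x, g (d * k + x) = c ^ k * g x := by
    intro k
    induction k with
    | zero => simp
    | succ k ih =>
      intro x
      rw [mul_add_one, add_right_comm, hg, ih, pow_succ, mul_comm _ c, mul_assoc]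
  induction e with
  | zero => simp
  | succ e ih =>
    rw [mul_add_one, sum_range_add, ih, sum_range_succ, add_mul, mul_sum, mul_sum]
    simp only [hshift]

section ProgressionSum

variable {K : Type*} [Field K]

def progressionSum (ζ : K) (N d : ℕ) (w : ℤ) : K :=
  ∑ x ∈ range N, if (d : ℤ) ∣ x - w then ζ ^ x else 0

theorem progressionSum_eq_zero {ζ : K} {N d : ℕ} (w : ℤ) (hdN : d ∣ N) (hN : ζ ^ N = 1)
    (hd : ζ ^ d ≠ 1) : progressionSum ζ N d w = 0 := by
  obtain ⟨e, rfl⟩ := hdN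
  have hperiod : ∀ x : ℕ, (if (d : ℤ) ∣ ↑(x + d) - w then ζ ^ (x + d) else 0)
      = ζ ^ d * if (d : ℤ) ∣ x - w then ζ ^ x else 0 := by
    intro x
    have : ((x + d : ℕ) : ℤ) - w = (x - w) + d := by push_cast; ring
    simp only [this, dvd_add_self_right, mul_ite, mul_zero, pow_add, mul_comm]
  rw [progressionSum, sum_range_mul_eq_geom_sum_mul hperiod, geom_sum_eq hd, ← pow_mul, hN,
    sub_self, zero_div, zero_mul]

theorem progressionSum_ne_zero [CharZero K] {ζ : K} {N d : ℕ} (w : ℤ) (hd : 0 < d) (hdN : d ≤ N)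
    (hζ : ζ ^ d = 1) : progressionSum ζ N d w ≠ 0 := by
  have hζ0 : ζ ≠ 0 := ne_zero_pow hd.ne' (by simp [hζ])
  have hconst : ∀ x : ℕ, (d : ℤ) ∣ x - w → ζ ^ x = ζ ^ w := by
    rintro x ⟨k, hk⟩
    rw [← zpow_natCast, show (x : ℤ) = w + d * k by omega, zpow_add₀ hζ0, zpow_mul, zpow_natCast,
      hζ, one_zpow, mul_one]
  have hwitness : (w % d).toNat ∈ (range N).filter fun x : ℕ => (d : ℤ) ∣ x - w := by
    have hd' : (0 : ℤ) < d := by exact_mod_cast hd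
    rw [mem_filter, mem_range, Int.toNat_of_nonneg (Int.emod_nonneg w hd'.ne')]
    refine ⟨?_, (dvd_sub_comm).mp Int.dvd_self_sub_emod⟩
    have := Int.emod_lt_of_pos w hd'
    omega
  rw [progressionSum, sum_congr rfl fun x _ => ite_congr rfl (hconst x) fun _ => rfl, sum_ite,
    sum_const_zero, add_zero, sum_const, nsmul_eq_mul]
  exact mul_ne_zero (Nat.cast_ne_zero.mpr (card_ne_zero.mpr ⟨_, hwitness⟩)) (zpow_ne_zero _ hζ0)

theorem progressionSum_ne_zero_iff [CharZero K] {ζ : K} {N d₀ d : ℕ} (w : ℤ)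
    (hζ : IsPrimitiveRoot ζ d₀) (hN : 0 < N) (hd₀N : d₀ ∣ N) (hd : 0 < d) (hdN : d ∣ N) :
    progressionSum ζ N d w ≠ 0 ↔ d₀ ∣ d := by
  rw [← hζ.pow_eq_one_iff_dvd]
  refine ⟨fun h => ?_, progressionSum_ne_zero w hd (Nat.le_of_dvd hN hdN)⟩
  by_contra hne
  exact h (progressionSum_eq_zero w hdN ((hζ.pow_eq_one_iff_dvd N).mpr hd₀N) hne)

end ProgressionSum

section BoxCharSum

variable {K : Type*} [Field K]

noncomputable def boxCharSum (ζ₁ ζ₂ : K) (A B : ℕ) (S : Set (ℤ × ℤ)) : K :=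
  ∑ p ∈ range A ×ˢ range B, S.indicator (fun q => ζ₁ ^ q.1 * ζ₂ ^ q.2) (p.1, p.2)

theorem boxCharSum_iUnion {ι : Type*} [Fintype ι] (ζ₁ ζ₂ : K) (A B : ℕ) {S : ι → Set (ℤ × ℤ)}
    (hS : Pairwise (Disjoint on S)) :
    boxCharSum ζ₁ ζ₂ A B (⋃ i, S i) = ∑ i, boxCharSum ζ₁ ζ₂ A B (S i) := by
  have hunion : (⋃ i, S i) = ⋃ i ∈ (univ : Finset ι), S i := by simp
  simp only [boxCharSum, hunion,
    indicator_biUnion_apply _ _ (fun i _ j _ hij => hS hij), sum_comm (s := range A ×ˢ range B)]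

theorem boxCharSum_cartCoset2 (ζ₁ ζ₂ : K) (A B : ℕ) (v : ℤ × ℤ) (a b : ℕ) :
    boxCharSum ζ₁ ζ₂ A B (cartCoset2 v a b)
      = progressionSum ζ₁ A a v.1 * progressionSum ζ₂ B b v.2 := by
  classical
  rw [boxCharSum, progressionSum, progressionSum, sum_mul_sum, sum_product]
  refine sum_congr rfl fun x _ => sum_congr rfl fun y _ => ?_
  simp only [Set.indicator_apply, cartCoset2, Set.mem_ofPred_eq, ite_and, zpow_natCast]
  split_ifs <;> simp

theorem boxCharSum_cartCoset2_ne_zero_iff [CharZero K] {ζ₁ ζ₂ : K} {A B a₀ b₀ : ℕ}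
    (hζ₁ : IsPrimitiveRoot ζ₁ a₀) (hζ₂ : IsPrimitiveRoot ζ₂ b₀) (hA : 0 < A) (hB : 0 < B)
    (ha₀ : a₀ ∣ A) (hb₀ : b₀ ∣ B) (v : ℤ × ℤ) {a b : ℕ} (ha : 0 < a) (hb : 0 < b)
    (haA : a ∣ A) (hbB : b ∣ B) :
    boxCharSum ζ₁ ζ₂ A B (cartCoset2 v a b) ≠ 0 ↔ a₀ ∣ a ∧ b₀ ∣ b := by
  rw [boxCharSum_cartCoset2, mul_ne_zero_iff,
    progressionSum_ne_zero_iff _ hζ₁ hA ha₀ ha haA, progressionSum_ne_zero_iff _ hζ₂ hB hb₀ hb hbB]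

end BoxCharSum

theorem cartCoset2_one_one (v : ℤ × ℤ) : cartCoset2 v 1 1 = Set.univ := by
  simp [cartCoset2]

theorem eq_and_eq_of_dvd_of_dvd_of_mul_le {a b a' b' : ℕ} (ha' : 0 < a') (hb' : 0 < b')
    (ha : a ∣ a') (hb : b ∣ b') (h : a' * b' ≤ a * b) : a = a' ∧ b = b' := by
  have := Nat.le_of_dvd ha' ha
  have := Nat.le_of_dvd hb' hb
  constructor <;> nlinarith

theorem Z2_tiling_has_translates (n : ℕ) (hn : 2 ≤ n)
    (v : Fin n → ℤ × ℤ) (a b : Fin n → ℕ)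
    (ha : ∀ j, 0 < a j) (hb : ∀ j, 0 < b j)
    (hdisj : ∀ j m, j ≠ m → Disjoint (cartCoset2 (v j) (a j) (b j)) (cartCoset2 (v m) (a m) (b m)))
    (hcover : (⋃ j, cartCoset2 (v j) (a j) (b j)) = Set.univ) :
    ∃ j m, j ≠ m ∧ a j = a m ∧ b j = b m := by
  by_contra! hdistinct
  obtain ⟨j₀, -, hj₀⟩ :=
    univ.exists_max_image (fun j => a j * b j) (univ_nonempty_iff.mpr ⟨⟨0, by omega⟩⟩)
  obtain ⟨ζ₁, hζ₁⟩ : ∃ ζ : ℂ, IsPrimitiveRoot ζ (a j₀) :=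
    ⟨_, Complex.isPrimitiveRoot_exp _ (ha j₀).ne'⟩
  obtain ⟨ζ₂, hζ₂⟩ : ∃ ζ : ℂ, IsPrimitiveRoot ζ (b j₀) :=
    ⟨_, Complex.isPrimitiveRoot_exp _ (hb j₀).ne'⟩
  set S := boxCharSum ζ₁ ζ₂ (∏ j, a j) (∏ j, b j)
  have hS : ∀ w c d, 0 < c → 0 < d → c ∣ ∏ j, a j → d ∣ ∏ j, b j →
      (S (cartCoset2 w c d) ≠ 0 ↔ a j₀ ∣ c ∧ b j₀ ∣ d) :=
    boxCharSum_cartCoset2_ne_zero_iff hζ₁ hζ₂ (prod_pos fun j _ => ha j) (prod_pos fun j _ => hb j)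
      (dvd_prod_of_mem _ (mem_univ j₀)) (dvd_prod_of_mem _ (mem_univ j₀))
  have htile (j) : S (cartCoset2 (v j) (a j) (b j)) ≠ 0 ↔ a j₀ ∣ a j ∧ b j₀ ∣ b j :=
    hS _ _ _ (ha j) (hb j) (dvd_prod_of_mem _ (mem_univ j)) (dvd_prod_of_mem _ (mem_univ j))
  have honly (j) (hj : S (cartCoset2 (v j) (a j) (b j)) ≠ 0) : j = j₀ := by
    obtain ⟨haj, hbj⟩ := eq_and_eq_of_dvd_of_dvd_of_mul_le (ha j) (hb j) ((htile j).1 hj).1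
      ((htile j).1 hj).2 (hj₀ j (mem_univ j))
    by_contra hne
    exact hdistinct j j₀ hne haj.symm hbj.symm
  have htotal : S (cartCoset2 0 1 1) = S (cartCoset2 (v j₀) (a j₀) (b j₀)) := by
    rw [cartCoset2_one_one, ← hcover]
    exact (boxCharSum_iUnion _ _ _ _ hdisj).trans <|
      sum_eq_single j₀ (fun j _ hj => by_contra fun h => hj (honly j h)) (by simp)
  obtain ⟨ha₀, hb₀⟩ : a j₀ ∣ 1 ∧ b j₀ ∣ 1 :=
    (hS 0 1 1 one_pos one_pos (one_dvd _) (one_dvd _)).1 (htotal ▸ (htile j₀).2 ⟨dvd_rfl, dvd_rfl⟩)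
  have : Nontrivial (Fin n) := Fin.nontrivial_iff_two_le.mpr hn
  obtain ⟨j, hj⟩ := exists_ne j₀
  exact hj (honly j ((htile j).2 ⟨ha₀.trans (one_dvd _), hb₀.trans (one_dvd _)⟩))
end
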